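/- Let γ¹, γ² : I → ℝᵐ be regular smooth curves (nonvanishing derivative) with a common point γ¹(t₁) = γ²(t₂), and suppose that in graph coordinates over their common tangent direction, the representing functions have different k-jets at the common point for some k. Then (t₁, t₂) is an isolated point of the intersection set {(s₁, s₂) : γ¹(s₁) = γ²(s₂)}. -/

import Mathlib

open Topology Set

/-- If a smooth real function has vanishing derivatives of order `< r` at `a`
but nonzero `r`-th derivative, then it has no zeros near `a` other than possibly `a`. -/
lemma key_aux : ∀ (r : ℕ) (h : ℝ → ℝ), ContDiff ℝ (⊤:ℕ∞) h → ∀ (a : ℝ),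
    (∀ j < r, iteratedDeriv j h a = 0) → iteratedDeriv r h a ≠ 0 →
    ∃ ε > (0:ℝ), ∀ τ, τ ≠ a → |τ - a| < ε → h τ ≠ 0 := by
  intro r
  induction r with
  | zero =>
    intro h hh a _ h0
    rw [iteratedDeriv_zero] at h0
    have : ∀ᶠ τ in 𝓝 a, h τ ≠ 0 := hh.continuous.continuousAt.eventually_ne h0
    rw [Metric.eventually_nhds_iff] at this
    obtain ⟨ε, hε, H⟩ := this
    exact ⟨ε, hε, fun τ _ hτ => H (by simpa [Real.dist_eq] using hτ)⟩
  | succ r ih =>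
    intro h hh a hlow hr
    have hh' : ContDiff ℝ (⊤:ℕ∞) (deriv h) := (contDiff_infty_iff_deriv.mp hh).2
    have hlow' : ∀ j < r, iteratedDeriv j (deriv h) a = 0 := by
      intro j hj
      have := hlow (j+1) (by omega)
      rwa [iteratedDeriv_succ'] at this
    have hr' : iteratedDeriv r (deriv h) a ≠ 0 := by
      rwa [iteratedDeriv_succ'] at hr
    obtain ⟨ε, hε, H⟩ := ih (deriv h) hh' a hlow' hr'
    have ha : h a = 0 := by simpa using hlow 0 (by omega)
    refine ⟨ε, hε, fun τ hτa hτ hzero => ?_⟩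
    rcases lt_or_gt_of_ne hτa with hlt | hgt
    · -- τ < a
      obtain ⟨c, hc, hc0⟩ := exists_deriv_eq_zero hlt
        (hh.continuous.continuousOn) (by rw [ha, hzero])
      have : c ≠ a := ne_of_lt hc.2
      have : |c - a| < ε := by
        rw [abs_sub_lt_iff] at hτ ⊢
        constructor <;> [linarith [hc.1, hc.2]; linarith [hc.1, hc.2]]
      exact H c ‹c ≠ a› this hc0
    · -- a < τ
      obtain ⟨c, hc, hc0⟩ := exists_deriv_eq_zero hgt
        (hh.continuous.continuousOn) (by rw [ha, hzero])
      have : c ≠ a := ne_of_gt hc.1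
      have : |c - a| < ε := by
        rw [abs_sub_lt_iff] at hτ ⊢
        constructor <;> [linarith [hc.1, hc.2]; linarith [hc.1, hc.2]]
      exact H c ‹c ≠ a› this hc0

/-- Two regular curves through a common point whose graph representations have
different `k`-jets intersect in an isolated pair of parameters. -/
theorem stmt16 (m k : ℕ) (γ₁ γ₂ : ℝ → Fin m → ℝ)
    (hγ₁ : ContDiff ℝ (⊤ : ℕ∞) γ₁) (hγ₂ : ContDiff ℝ (⊤ : ℕ∞) γ₂)
    (hreg₁ : ∀ t, deriv γ₁ t ≠ 0) (hreg₂ : ∀ t, deriv γ₂ t ≠ 0)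
    (t₁ t₂ : ℝ) (hcommon : γ₁ t₁ = γ₂ t₂)
    -- graph coordinates over the common tangent direction:
    (A : (Fin m → ℝ) ≃ₗ[ℝ] ℝ × (Fin (m - 1) → ℝ))
    (y₁ y₂ : ℝ → Fin (m - 1) → ℝ) (hy₁ : ContDiff ℝ (⊤ : ℕ∞) y₁) (hy₂ : ContDiff ℝ (⊤ : ℕ∞) y₂)
    (tstar : ℝ) (hstar : (A (γ₁ t₁)).1 = tstar)
    (U₁ U₂ : Set ℝ) (hU₁ : U₁ ∈ nhds t₁) (hU₂ : U₂ ∈ nhds t₂)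
    (hgraph₁ : ∀ s ∈ U₁, A (γ₁ s) = ((A (γ₁ s)).1, y₁ ((A (γ₁ s)).1)))
    (hgraph₂ : ∀ s ∈ U₂, A (γ₂ s) = ((A (γ₂ s)).1, y₂ ((A (γ₂ s)).1)))
    (hinj₁ : Set.InjOn (fun s => (A (γ₁ s)).1) U₁)
    (hinj₂ : Set.InjOn (fun s => (A (γ₂ s)).1) U₂)
    -- the graph functions have different k-jets at the common point:
    (hjet : ∃ r ≤ k, iteratedDeriv r y₁ tstar ≠ iteratedDeriv r y₂ tstar) :
    ∃ ε > (0 : ℝ), ∀ s t : ℝ, |s - t₁| < ε → |t - t₂| < ε →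
      γ₁ s = γ₂ t → s = t₁ ∧ t = t₂ := by
  classical
  -- minimal r with different derivatives
  have hP : ∃ r, iteratedDeriv r y₁ tstar ≠ iteratedDeriv r y₂ tstar := by
    obtain ⟨r, _, hr⟩ := hjet; exact ⟨r, hr⟩
  set r := Nat.find hP with hrdef
  have hrne : iteratedDeriv r y₁ tstar ≠ iteratedDeriv r y₂ tstar := Nat.find_spec hP
  have hrlow : ∀ j < r, iteratedDeriv j y₁ tstar = iteratedDeriv j y₂ tstar := by
    intro j hj
    by_contra hne
    exact hj.not_ge (Nat.find_le hne)
  -- the difference function and a witness coordinate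
  set g : ℝ → Fin (m - 1) → ℝ := fun τ => y₁ τ - y₂ τ with hgdef
  have hg : ContDiff ℝ (⊤ : ℕ∞) g := (hy₁.sub hy₂).of_le (by simp)
  have hsub : ∀ j : ℕ, iteratedDeriv j g tstar
      = iteratedDeriv j y₁ tstar - iteratedDeriv j y₂ tstar := by
    intro j
    have : g = (y₁ - y₂) := rfl
    rw [this]
    simp only [← iteratedDerivWithin_univ]
    exact iteratedDerivWithin_sub (Set.mem_univ _) uniqueDiffOn_univ
      (hy₁.contDiffWithinAt.of_le (by exact_mod_cast le_top)) (hy₂.contDiffWithinAt.of_le (by exact_mod_cast le_top))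
  have hrg : iteratedDeriv r g tstar ≠ 0 := by
    rw [hsub]; exact sub_ne_zero_of_ne hrne
  obtain ⟨i, hi⟩ : ∃ i, iteratedDeriv r g tstar i ≠ 0 := by
    by_contra hcon
    push_neg at hcon
    exact hrg (funext hcon)
  -- the scalar function h
  set h : ℝ → ℝ := fun τ => g τ i with hhdef
  have hproj : ∀ (j : ℕ) (x : ℝ), iteratedDeriv j h x = iteratedDeriv j g x i := by
    intro j x
    have hc := (ContinuousLinearMap.proj (R := ℝ) (φ := fun _ : Fin (m - 1) => ℝ)
      i).iteratedFDeriv_comp_left (hg.contDiffAt (x := x)) (show ((j:ℕ∞) : WithTop ℕ∞) ≤ ((⊤:ℕ∞) : WithTop ℕ∞) from by exact_mod_cast le_top)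
    have : h = (ContinuousLinearMap.proj (R := ℝ) (φ := fun _ : Fin (m - 1) => ℝ) i) ∘ g := rfl
    rw [this, iteratedDeriv_eq_iteratedFDeriv, iteratedDeriv_eq_iteratedFDeriv, hc]
    rfl
  have hh : ContDiff ℝ (⊤ : ℕ∞) h :=
    ((ContinuousLinearMap.proj (R := ℝ) (φ := fun _ : Fin (m - 1) => ℝ) i).contDiff.comp hg)
  have hlow : ∀ j < r, iteratedDeriv j h tstar = 0 := by
    intro j hj
    rw [hproj, hsub, hrlow j hj, sub_self]; rfl
  have hrh : iteratedDeriv r h tstar ≠ 0 := by rw [hproj]; exact hi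
  obtain ⟨ε', hε', Hkey⟩ := key_aux r h hh tstar hlow hrh
  -- continuity of the first graph coordinate
  have hAcont : Continuous fun v : Fin m → ℝ => A v :=
    A.toLinearMap.continuous_of_finiteDimensional
  have hf₁ : Continuous fun s => (A (γ₁ s)).1 :=
    continuous_fst.comp (hAcont.comp hγ₁.continuous)
  -- choose ε
  obtain ⟨δ₁, hδ₁, hball₁⟩ := Metric.mem_nhds_iff.mp hU₁
  obtain ⟨δ₂, hδ₂, hball₂⟩ := Metric.mem_nhds_iff.mp hU₂
  have hcont : ∀ᶠ s in 𝓝 t₁, |(A (γ₁ s)).1 - tstar| < ε' := by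
    have : ContinuousAt (fun s => (A (γ₁ s)).1) t₁ := hf₁.continuousAt
    rw [show tstar = (fun s => (A (γ₁ s)).1) t₁ from hstar.symm]
    have h2 := this.eventually_mem (Metric.ball_mem_nhds ((fun s => (A (γ₁ s)).1) t₁) hε')
    filter_upwards [h2] with s hs
    simpa [Real.dist_eq] using hs
  obtain ⟨δ₃, hδ₃, Hδ₃⟩ := Metric.eventually_nhds_iff.mp hcont
  refine ⟨min δ₃ (min δ₁ δ₂), by positivity, fun s t hs ht heq => ?_⟩
  have hsU : s ∈ U₁ := hball₁ (by
    simp only [Metric.mem_ball, Real.dist_eq]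
    exact lt_of_lt_of_le hs (le_trans (min_le_right _ _) (min_le_left _ _)))
  have htU : t ∈ U₂ := hball₂ (by
    simp only [Metric.mem_ball, Real.dist_eq]
    exact lt_of_lt_of_le ht (le_trans (min_le_right _ _) (min_le_right _ _)))
  have ht₁U : t₁ ∈ U₁ := mem_of_mem_nhds hU₁
  have ht₂U : t₂ ∈ U₂ := mem_of_mem_nhds hU₂
  set τ := (A (γ₁ s)).1 with hτdef
  have hAeq : A (γ₁ s) = A (γ₂ t) := by rw [heq]
  have hfst : (A (γ₂ t)).1 = τ := by rw [← hAeq]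
  have hg₁ := hgraph₁ s hsU
  have hg₂ := hgraph₂ t htU
  -- y₁ τ = y₂ τ
  have hyeq : y₁ τ = y₂ τ := by
    have : ((A (γ₁ s)).1, y₁ ((A (γ₁ s)).1)) = ((A (γ₂ t)).1, y₂ ((A (γ₂ t)).1)) := by
      rw [← hg₁, ← hg₂, hAeq]
    have h2 := congrArg Prod.snd this
    simpa [hfst] using h2
  -- τ is close to tstar
  have hτclose : |τ - tstar| < ε' :=
    Hδ₃ (by simpa [Real.dist_eq] using
      lt_of_lt_of_le hs (min_le_left _ _))
  -- hence τ = tstar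
  have hτstar : τ = tstar := by
    by_contra hne
    exact Hkey τ hne hτclose (by simp [hhdef, hgdef, hyeq])
  -- conclude via injectivity
  have hs1 : s = t₁ := hinj₁ hsU ht₁U (by simpa [hstar] using hτstar)
  have ht2 : t = t₂ := by
    have hA2 : (A (γ₂ t₂)).1 = tstar := by rw [← hcommon, hstar]
    exact hinj₂ htU ht₂U (by simp only []; rw [hfst, hτstar, hA2])
  exact ⟨hs1, ht2⟩
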